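/- Let G be a prime graph with at least 4 vertices, let A be a fully closed set of vertices of G, and let v ∈ A. If X ⊆ V(G)−{v}, |X| = 2, and ρ_{G∖v}(X) ≤ 1, then |X ∩ A| ≠ 1. -/

import Mathlib

open Finset

variable {V : Type} [Fintype V] [DecidableEq V]

open scoped Classical

/-- The rank over GF(2) of the `X × Y` submatrix of the adjacency matrix of `G`. -/
noncomputable def cutRankOn (G : SimpleGraph V) (X Y : Finset V) : ℕ :=
  (Matrix.of (fun (i : ↥X) (j : ↥Y) => if G.Adj i.1 j.1 then (1 : ZMod 2) else 0)).rank

/-- The cut-rank of `X` in the graph `G` restricted to the vertex set `S`: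
the rank over GF(2) of the `X × (S \ X)` submatrix of the adjacency matrix. -/
noncomputable def cutRank (G : SimpleGraph V) (S X : Finset V) : ℕ :=
  cutRankOn G X (S \ X)

/-- `A` gives a split of the graph `G` restricted to the vertex set `S`. -/
def IsSplit (G : SimpleGraph V) (S A : Finset V) : Prop :=
  A ⊆ S ∧ cutRank G S A ≤ 1 ∧ 2 ≤ A.card ∧ 2 ≤ (S \ A).card

/-- The graph `G` restricted to the vertex set `S` is prime: connected and with no split. -/
def IsPrime (G : SimpleGraph V) (S : Finset V) : Prop :=
  (G.induce (↑S : Set V)).Connected ∧ ∀ A, ¬ IsSplit G S A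

/-- `G` restricted to `S` is `k⁺ˡ`-rank-connected. -/
def RankConn (G : SimpleGraph V) (S : Finset V) (k l : ℤ) : Prop :=
  ∀ X ⊆ S, (cutRank G S X : ℤ) < k →
    min (X.card : ℤ) (((S \ X).card : ℤ)) < k + l

/-- `G` restricted to `S` is `k`-rank-connected. -/
def RankConnAll (G : SimpleGraph V) (S : Finset V) (k : ℤ) : Prop :=
  ∀ m : ℤ, m ≤ k → RankConn G S m 0

def SideA (G : SimpleGraph V) (v w x : V) : Prop := G.Adj v x ∧ ¬ G.Adj w x ∧ x ≠ w
def SideB (G : SimpleGraph V) (v w x : V) : Prop := G.Adj w x ∧ ¬ G.Adj v x ∧ x ≠ v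
def SideC (G : SimpleGraph V) (v w x : V) : Prop := G.Adj v x ∧ G.Adj w x

/-- `x` and `y` lie in different ones among the three sets
`N(v)−N(w)−{w}`, `N(w)−N(v)−{v}`, `N(v)∩N(w)`. -/
def PivotToggle (G : SimpleGraph V) (v w x y : V) : Prop :=
  (SideA G v w x ∧ SideB G v w y) ∨ (SideB G v w x ∧ SideA G v w y) ∨
  (SideA G v w x ∧ SideC G v w y) ∨ (SideC G v w x ∧ SideA G v w y) ∨
  (SideB G v w x ∧ SideC G v w y) ∨ (SideC G v w x ∧ SideB G v w y)

set_option linter.unusedSectionVars false in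
lemma pivotToggle_symm {G : SimpleGraph V} {v w x y : V}
    (h : PivotToggle G v w x y) : PivotToggle G v w y x := by
  unfold PivotToggle at h ⊢; tauto

/-- The graph `G ∧ vw` obtained by pivoting the edge `vw`: toggle adjacency across the
three sets and swap the labels of `v` and `w`. -/
def pivot (G : SimpleGraph V) (v w : V) : SimpleGraph V where
  Adj a b := a ≠ b ∧
    Xor' (G.Adj (Equiv.swap v w a) (Equiv.swap v w b))
         (PivotToggle G v w (Equiv.swap v w a) (Equiv.swap v w b))
  symm := by
    refine ⟨?_⟩
    intro a b h
    obtain ⟨hne, hx⟩ := h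
    refine ⟨hne.symm, ?_⟩
    have hA : G.Adj (Equiv.swap v w b) (Equiv.swap v w a) ↔
        G.Adj (Equiv.swap v w a) (Equiv.swap v w b) := SimpleGraph.adj_comm _ _ _
    have hT : PivotToggle G v w (Equiv.swap v w b) (Equiv.swap v w a) ↔
        PivotToggle G v w (Equiv.swap v w a) (Equiv.swap v w b) :=
      ⟨pivotToggle_symm, pivotToggle_symm⟩
    rw [hA, hT]
    exact hx
  loopless := by refine ⟨?_⟩; intro a h; exact h.1 rfl

/-- One pivot step along an edge. -/
def PivotStep (G H : SimpleGraph V) : Prop := ∃ v w, G.Adj v w ∧ H = pivot G v w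

/-- Pivot-equivalence: a sequence of pivots. -/
def PivotEquiv : SimpleGraph V → SimpleGraph V → Prop := Relation.ReflTransGen PivotStep

/-- `A` is a fully closed set of `G` restricted to `S`. -/
def FullyClosed (G : SimpleGraph V) (S A : Finset V) : Prop :=
  A ⊆ S ∧ cutRank G S A = 2 ∧ 2 < A.card ∧
    ∀ u ∈ S, u ∉ A → cutRank G S A < cutRank G S (insert u A)

/-- `{a,b,c}` is a triplet of `G` (on vertex set `univ`). -/
def Triplet (G : SimpleGraph V) (a b c : V) : Prop :=
  cutRank G Finset.univ {a, b, c} = 2 ∧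
  ∀ x ∈ ({a, b, c} : Finset V),
    cutRank G (Finset.univ \ {x}) (({a, b, c} : Finset V) \ {x}) = 2

/-- `B` is a `k`-branched set of `G` restricted to `S`. -/
inductive KBranched (G : SimpleGraph V) (S : Finset V) (k : ℕ) : Finset V → Prop
  | single (v : V) (hv : v ∈ S) (h : cutRank G S {v} ≤ k) : KBranched G S k {v}
  | split (B B' : Finset V) (hB : B ⊆ S) (h : cutRank G S B ≤ k)
      (h1 : B' ⊆ B) (h2 : B'.Nonempty) (h3 : B' ≠ B)
      (hb1 : KBranched G S k B') (hb2 : KBranched G S k (B \ B')) : KBranched G S k B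

/-- The rank-width of `G` restricted to `S`: the least `k` such that `S` is `k`-branched
(equivalently, the minimum width of a rank-decomposition). -/
noncomputable def rankWidth (G : SimpleGraph V) (S : Finset V) : ℕ :=
  sInf {k | S = ∅ ∨ KBranched G S k S}

/-- `A` is a titanic set of `G` restricted to `S`. -/
def Titanic (G : SimpleGraph V) (S A : Finset V) : Prop :=
  ∀ A1 A2 A3 : Finset V, A1 ∪ A2 ∪ A3 = A →
    Disjoint A1 A2 → Disjoint A1 A3 → Disjoint A2 A3 →
    cutRank G S A ≤ cutRank G S A1 ∨ cutRank G S A ≤ cutRank G S A2 ∨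
      cutRank G S A ≤ cutRank G S A3

/-
Write `X ∩ A = {x}` and `X = {x, y}`. As `A` is fully closed, `ρ(A ∪ {y}) ≥ 3`, while
`ρ({v} ∪ X) ≤ ρ_{G∖v}(X) + 1 ≤ 2`. Submodularity of the cut-rank applied to `A` and `{v} ∪ X`,
whose union is `A ∪ {y}` and whose intersection is `{v, x}`, gives `ρ({v, x}) ≤ 1`: a split of `G`.
Submodularity of the cut-rank is the modular law `dim (W₁ ⊔ W₂) + dim (W₁ ⊓ W₂) = dim W₁ + dim W₂`
applied twice, once to the column spaces and once to their vectors vanishing on the rows.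
-/

section FinrankMap

variable {K E : Type*} [Field K] [AddCommGroup E] [Module K E] [FiniteDimensional K E]

theorem Submodule.finrank_map_add_finrank_inf_ker {F : Type*} [AddCommGroup F] [Module K F]
    (W : Submodule K E) (f : E →ₗ[K] F) :
    Module.finrank K (W.map f) + Module.finrank K ↥(W ⊓ LinearMap.ker f) = Module.finrank K W := by
  have h := (f.domRestrict W).finrank_range_add_finrank_ker
  rwa [LinearMap.range_domRestrict, LinearMap.ker_domRestrict, ← finrank_map_subtype_eq,
    map_comap_subtype] at h

theorem Submodule.finrank_map_inf_add_finrank_map_sup_le {F₁ F₂ F₃ F₄ : Type*}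
    [AddCommGroup F₁] [Module K F₁] [AddCommGroup F₂] [Module K F₂]
    [AddCommGroup F₃] [Module K F₃] [AddCommGroup F₄] [Module K F₄]
    (W₁ W₂ : Submodule K E) {f₁ : E →ₗ[K] F₁} {f₂ : E →ₗ[K] F₂} {f : E →ₗ[K] F₃}
    {g : E →ₗ[K] F₄} (hf : LinearMap.ker f₁ ⊓ LinearMap.ker f₂ ≤ LinearMap.ker f)
    (hg₁ : LinearMap.ker f₁ ≤ LinearMap.ker g) (hg₂ : LinearMap.ker f₂ ≤ LinearMap.ker g) :
    Module.finrank K ((W₁ ⊓ W₂).map f) + Module.finrank K ((W₁ ⊔ W₂).map g) ≤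
      Module.finrank K (W₁.map f₁) + Module.finrank K (W₂.map f₂) := by
  have hinf : Module.finrank K ↥((W₁ ⊓ LinearMap.ker f₁) ⊓ (W₂ ⊓ LinearMap.ker f₂)) ≤
      Module.finrank K ↥(W₁ ⊓ W₂ ⊓ LinearMap.ker f) :=
    Submodule.finrank_mono fun w ⟨⟨hw₁, hk₁⟩, hw₂, hk₂⟩ => ⟨⟨hw₁, hw₂⟩, hf ⟨hk₁, hk₂⟩⟩
  have hsup : Module.finrank K ↥((W₁ ⊓ LinearMap.ker f₁) ⊔ (W₂ ⊓ LinearMap.ker f₂)) ≤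
      Module.finrank K ↥((W₁ ⊔ W₂) ⊓ LinearMap.ker g) :=
    Submodule.finrank_mono <| sup_le (inf_le_inf le_sup_left hg₁) (inf_le_inf le_sup_right hg₂)
  have := finrank_map_add_finrank_inf_ker W₁ f₁
  have := finrank_map_add_finrank_inf_ker W₂ f₂
  have := finrank_map_add_finrank_inf_ker (W₁ ⊓ W₂) f
  have := finrank_map_add_finrank_inf_ker (W₁ ⊔ W₂) g
  have := Submodule.finrank_sup_add_finrank_inf_eq W₁ W₂
  have := Submodule.finrank_sup_add_finrank_inf_eq
    (W₁ ⊓ LinearMap.ker f₁) (W₂ ⊓ LinearMap.ker f₂)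
  omega

end FinrankMap

namespace Matrix

variable {K α β : Type*} [Field K]

theorem mem_ker_funLeft_coe {X : Finset α} {w : α → K} :
    w ∈ LinearMap.ker (LinearMap.funLeft K K ((↑) : X → α)) ↔ ∀ i ∈ X, w i = 0 := by
  simp [funext_iff]

theorem rank_submatrix_coe_eq_finrank_map (M : Matrix α β K) (X : Finset α) (Y : Finset β) :
    (M.submatrix ((↑) : X → α) ((↑) : Y → β)).rank =
      Module.finrank K ((Submodule.span K (M.col '' Y)).map
        (LinearMap.funLeft K K ((↑) : X → α))) := by
  rw [rank_eq_finrank_span_cols, Submodule.map_span, Set.image_image, Set.image_eq_range]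
  rfl

theorem rank_submatrix_submod [Fintype α] [DecidableEq α] [DecidableEq β] (M : Matrix α β K)
    (X₁ X₂ : Finset α) (Y₁ Y₂ : Finset β) :
    (M.submatrix ((↑) : ↥(X₁ ∪ X₂) → α) ((↑) : ↥(Y₁ ∩ Y₂) → β)).rank +
        (M.submatrix ((↑) : ↥(X₁ ∩ X₂) → α) ((↑) : ↥(Y₁ ∪ Y₂) → β)).rank ≤
      (M.submatrix ((↑) : X₁ → α) ((↑) : Y₁ → β)).rank +
        (M.submatrix ((↑) : X₂ → α) ((↑) : Y₂ → β)).rank := by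
  simp only [rank_submatrix_coe_eq_finrank_map]
  have hcols : Submodule.span K (M.col '' ↑(Y₁ ∩ Y₂)) ≤
      Submodule.span K (M.col '' Y₁) ⊓ Submodule.span K (M.col '' Y₂) :=
    le_inf (Submodule.span_mono (Set.image_mono (by simp)))
      (Submodule.span_mono (Set.image_mono (by simp)))
  rw [Finset.coe_union, Set.image_union, Submodule.span_union]
  refine le_trans (Nat.add_le_add_right (Submodule.finrank_mono (Submodule.map_mono hcols)) _)
    (Submodule.finrank_map_inf_add_finrank_map_sup_le _ _ ?_ ?_ ?_)
  all_goals
    intro w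
    simp only [Submodule.mem_inf, mem_ker_funLeft_coe, Finset.mem_union, Finset.mem_inter]
    grind

end Matrix

section CutRank

variable {U : Type} (G : SimpleGraph U)

theorem cutRankOn_eq_rank_submatrix (X Y : Finset U) :
    cutRankOn G X Y =
      ((G.adjMatrix (ZMod 2)).submatrix ((↑) : X → U) ((↑) : Y → U)).rank :=
  rfl

theorem cutRankOn_le_card (X Y : Finset U) : cutRankOn G X Y ≤ X.card :=
  (Matrix.rank_le_card_height _).trans (Fintype.card_coe X).le

theorem cutRankOn_union_left_le [Fintype U] [DecidableEq U] (X₁ X₂ Y : Finset U) :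
    cutRankOn G (X₁ ∪ X₂) Y ≤ cutRankOn G X₁ Y + cutRankOn G X₂ Y := by
  have := Matrix.rank_submatrix_submod (G.adjMatrix (ZMod 2)) X₁ X₂ Y Y
  rw [Finset.inter_self, Finset.union_self] at this
  rw [cutRankOn_eq_rank_submatrix, cutRankOn_eq_rank_submatrix, cutRankOn_eq_rank_submatrix]
  omega

theorem cutRank_submod [Fintype U] [DecidableEq U] (S A B : Finset U) :
    cutRank G S (A ∪ B) + cutRank G S (A ∩ B) ≤ cutRank G S A + cutRank G S B := by
  rw [cutRank, cutRank, cutRank, cutRank, Finset.sdiff_union_distrib,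
    Finset.sdiff_inter_distrib_right]
  exact Matrix.rank_submatrix_submod (G.adjMatrix (ZMod 2)) A B (S \ A) (S \ B)

theorem cutRank_insert_le [Fintype U] [DecidableEq U] (S X : Finset U) (v : U) :
    cutRank G S (insert v X) ≤ cutRank G (S \ {v}) X + 1 := by
  rw [cutRank, cutRank, Finset.insert_eq, sdiff_sdiff_left, Finset.sup_eq_union]
  have hrow := cutRankOn_le_card G {v} (S \ ({v} ∪ X))
  rw [Finset.card_singleton] at hrow
  have := cutRankOn_union_left_le G {v} X (S \ ({v} ∪ X))
  omega

end CutRank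

theorem fullyClosed_no_single {G : SimpleGraph V} (hcard : 4 ≤ Fintype.card V)
    (hG : IsPrime G Finset.univ) {A : Finset V} (hA : FullyClosed G Finset.univ A)
    {v : V} (hv : v ∈ A) {X : Finset V} (hX : X ⊆ Finset.univ \ {v})
    (hX2 : X.card = 2) (hXr : cutRank G (Finset.univ \ {v}) X ≤ 1) :
    (X ∩ A).card ≠ 1 := by
  intro hXA
  obtain ⟨x, hXA⟩ := Finset.card_eq_one.1 hXA
  obtain ⟨hxX, hxA⟩ := Finset.mem_inter.1 (hXA ▸ Finset.mem_singleton_self x)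
  obtain ⟨y, hy⟩ := Finset.card_eq_one.1 (by rw [Finset.card_erase_of_mem hxX, hX2])
  have hyX : y ∈ X.erase x := hy ▸ Finset.mem_singleton_self y
  have hyA : y ∉ A := fun hyA => Finset.ne_of_mem_erase hyX <|
    Finset.mem_singleton.1 (hXA ▸ Finset.mem_inter.2 ⟨Finset.mem_of_mem_erase hyX, hyA⟩)
  have hvx : v ≠ x := fun h => by simpa [h] using hX hxX
  have hgrow : 2 < cutRank G Finset.univ (insert y A) :=
    hA.2.1 ▸ hA.2.2.2 y (Finset.mem_univ y) hyA
  have hvX : cutRank G Finset.univ (insert v X) ≤ 2 :=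
    (cutRank_insert_le G Finset.univ X v).trans (by omega)
  have hunion : A ∪ insert v X = insert y A := by
    rw [← Finset.insert_erase hxX, hy]
    ext a
    simp only [Finset.mem_union, Finset.mem_insert, Finset.mem_singleton]
    grind
  have hsub := cutRank_submod G Finset.univ A (insert v X)
  rw [hunion, Finset.inter_insert_of_mem hv, Finset.inter_comm, hXA, hA.2.1] at hsub
  refine hG.2 {v, x} ⟨Finset.subset_univ _, by omega, (Finset.card_pair hvx).ge, ?_⟩
  rw [Finset.card_sdiff_of_subset (Finset.subset_univ _), Finset.card_univ, Finset.card_pair hvx]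
  omega
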